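/- arXiv:1309.5595 — 6 statements merged into one kernel-verified Lean document; each statement's English description precedes it below -/
import Mathlib

section
/- Let p ∈ [2,∞) and let (H, ⟨·,·⟩, ‖·‖) be a real Hilbert space. Then the function F : H → ℝ given by F(x) = ‖x‖^p is twice continuously Fréchet differentiable and for all x, v, w ∈ H it holds that F'(x)(v) = p‖x‖^{p−2}⟨x, v⟩ and F''(x)(v, w) = p‖x‖^{p−2}⟨v, w⟩ + p(p−2)‖x‖^{p−4}⟨x, v⟩⟨x, w⟩, where at x = 0 the right-hand sides are interpreted with the conventions 0⁰ = 1 and 0·∞ = 0 (so that for p > 2 both F'(0) and F''(0) vanish, and for p = 2 one has F'(0) = 0 and F''(0)(v,w) = 2⟨v,w⟩). -/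
/-!
With `L = innerSL ℝ`, the first derivative `p ‖x‖ ^ (p - 2) • L x` of `‖x‖ ^ p` is `p` times
`G x = ‖x‖ ^ q • L x` with `q = p - 2 ≥ 0`, so it suffices that `G` is `C¹` for every continuous
linear `L` and every `q ≥ 0`. Away from `0` this is the product rule. At `0`, for `q > 0`, the bound
`‖G x‖ ≤ ‖L‖ ‖x‖ ^ (1 + q)` gives `G' 0 = 0`, and `‖G' x‖ ≤ (1 + q) ‖L‖ ‖x‖ ^ q` gives continuity
of `G'` at `0`.
-/

open scoped RealInnerProductSpace

open Asymptotics Topology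

theorem hasFDerivAt_norm_rpow_smul_zero {E F : Type*} [NormedAddCommGroup E]
    [NormedSpace ℝ E] [NormedAddCommGroup F] [NormedSpace ℝ F] {q : ℝ} (hq : 0 < q)
    (L : E →L[ℝ] F) :
    HasFDerivAt (fun x : E => ‖x‖ ^ q • L x) (0 : E →L[ℝ] F) 0 := by
  refine .of_isLittleO ?_
  have hsmall : (fun x : E => ‖x‖ ^ q) =o[𝓝 0] (fun _ => (1 : ℝ)) := by
    refine (isLittleO_const_iff one_ne_zero).mpr ?_
    simpa [Real.zero_rpow hq.ne'] using
      (continuous_norm.rpow_const fun _ => Or.inr hq.le).tendsto (0 : E)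
  simpa using hsmall.smul_isBigO (L.isBigO_id (𝓝 0))

section

variable {E F : Type*} [NormedAddCommGroup E] [InnerProductSpace ℝ E]
  [NormedAddCommGroup F] [NormedSpace ℝ F]

theorem hasStrictFDerivAt_norm_rpow_of_ne_zero {x : E} (hx : x ≠ 0) (q : ℝ) :
    HasStrictFDerivAt (fun y : E => ‖y‖ ^ q) ((q * ‖x‖ ^ (q - 2)) • innerSL ℝ x) x := by
  convert (hasStrictFDerivAt_norm_sq x).rpow_const (p := q / 2) (by simp [hx]) using 0
  simp_rw [← Real.rpow_natCast_mul (norm_nonneg _), ← Nat.cast_smul_eq_nsmul ℝ, smul_smul]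
  ring_nf

/-- At `x = 0` the conventions `0 ^ 0 = 1` and `0 ^ t = 0` for `t ≠ 0` make this the derivative
of `fun x => ‖x‖ ^ q • L x` for every `q ≥ 0`. -/
noncomputable def fderivNormRpowSmul (q : ℝ) (L : E →L[ℝ] F) (x : E) : E →L[ℝ] F :=
  ‖x‖ ^ q • L + ((q * ‖x‖ ^ (q - 2)) • innerSL ℝ x).smulRight (L x)

theorem fderivNormRpowSmul_apply (q : ℝ) (L : E →L[ℝ] F) (x w : E) :
    fderivNormRpowSmul q L x w = ‖x‖ ^ q • L w + (q * ‖x‖ ^ (q - 2) * ⟪x, w⟫) • L x := by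
  simp [fderivNormRpowSmul, mul_assoc]

theorem fderivNormRpowSmul_zero {q : ℝ} (hq : 0 < q) (L : E →L[ℝ] F) :
    fderivNormRpowSmul q L 0 = 0 := by
  simp [fderivNormRpowSmul, Real.zero_rpow hq.ne']

theorem hasFDerivAt_norm_rpow_smul {q : ℝ} (hq : 0 ≤ q) (L : E →L[ℝ] F) (x : E) :
    HasFDerivAt (fun y : E => ‖y‖ ^ q • L y) (fderivNormRpowSmul q L x) x := by
  rcases eq_or_ne x 0 with rfl | hx
  · rcases hq.eq_or_lt with rfl | hq
    · simpa [fderivNormRpowSmul] using L.hasFDerivAt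
    · simpa [fderivNormRpowSmul_zero hq] using hasFDerivAt_norm_rpow_smul_zero hq L
  · exact (hasStrictFDerivAt_norm_rpow_of_ne_zero hx q).hasFDerivAt.smul L.hasFDerivAt

theorem norm_fderivNormRpowSmul_le {q : ℝ} (hq : 0 < q) (L : E →L[ℝ] F) (x : E) :
    ‖fderivNormRpowSmul q L x‖ ≤ (1 + q) * ‖L‖ * ‖x‖ ^ q := by
  have hpow : ‖x‖ ^ (q - 2) * ‖x‖ * ‖x‖ = ‖x‖ ^ q := by
    rw [mul_assoc, ← sq, ← Real.rpow_natCast,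
      ← Real.rpow_add' (norm_nonneg x) (by simpa using hq.ne')]
    norm_num
  calc ‖fderivNormRpowSmul q L x‖
      ≤ ‖x‖ ^ q * ‖L‖ + q * ‖x‖ ^ (q - 2) * ‖x‖ * (‖L‖ * ‖x‖) := by
        refine (norm_add_le _ _).trans (add_le_add ?_ ?_)
        · rw [norm_smul, Real.norm_of_nonneg (by positivity)]
        · rw [ContinuousLinearMap.norm_smulRight_apply, norm_smul, innerSL_apply_norm,
            Real.norm_of_nonneg (by positivity)]
          gcongr
          exact L.le_opNorm x
    _ = (1 + q) * ‖L‖ * ‖x‖ ^ q := by rw [← hpow]; ring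

theorem continuous_fderivNormRpowSmul {q : ℝ} (hq : 0 ≤ q) (L : E →L[ℝ] F) :
    Continuous (fderivNormRpowSmul q L) := by
  rcases hq.eq_or_lt with rfl | hq
  · rw [show fderivNormRpowSmul 0 L = fun _ => L from funext fun x => by simp [fderivNormRpowSmul]]
    exact continuous_const
  refine continuous_iff_continuousAt.2 fun x => ?_
  rcases eq_or_ne x 0 with rfl | hx
  · have hbound : Filter.Tendsto (fun x : E => (1 + q) * ‖L‖ * ‖x‖ ^ q) (𝓝 0) (𝓝 0) := by
      have hcont := ((continuous_norm (E := E)).rpow_const fun _ => Or.inr hq.le).const_mul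
        ((1 + q) * ‖L‖)
      simpa [Real.zero_rpow hq.ne'] using hcont.tendsto (0 : E)
    rw [ContinuousAt, fderivNormRpowSmul_zero hq]
    exact squeeze_zero_norm (norm_fderivNormRpowSmul_le hq L) hbound
  · -- `fun_prop` knows the bilinear map `smulRightL`, not `smulRight`.
    change ContinuousAt (fun y => ‖y‖ ^ q • L +
      ContinuousLinearMap.smulRightL ℝ E F ((q * ‖y‖ ^ (q - 2)) • innerSL ℝ y) (L y)) x
    fun_prop (discharger := simp [hx])

theorem contDiff_one_norm_rpow_smul {q : ℝ} (hq : 0 ≤ q) (L : E →L[ℝ] F) :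
    ContDiff ℝ 1 (fun x : E => ‖x‖ ^ q • L x) := by
  have hderiv := hasFDerivAt_norm_rpow_smul hq L
  refine contDiff_one_iff_fderiv.2 ⟨fun x => (hderiv x).differentiableAt, ?_⟩
  rw [show fderiv ℝ _ = fderivNormRpowSmul q L from funext fun x => (hderiv x).fderiv]
  exact continuous_fderivNormRpowSmul hq L

end

theorem norm_rpow_contDiff_two_and_derivs_general
    {H : Type*} [NormedAddCommGroup H] [InnerProductSpace ℝ H]
    (p : ℝ) (hp : 2 ≤ p) :
    ContDiff ℝ 2 (fun x : H => ‖x‖ ^ p) ∧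
    (∀ x v : H, fderiv ℝ (fun x : H => ‖x‖ ^ p) x v
        = p * ‖x‖ ^ (p - 2) * ⟪x, v⟫) ∧
    (∀ x v w : H,
        fderiv ℝ (fun y : H => fderiv ℝ (fun z : H => ‖z‖ ^ p) y v) x w
          = p * ‖x‖ ^ (p - 2) * ⟪v, w⟫
            + p * (p - 2) * ‖x‖ ^ (p - 4) * ⟪x, v⟫ * ⟪x, w⟫) := by
  have hp1 : 1 < p := by linarith
  have hq : 0 ≤ p - 2 := by linarith
  have hfderiv : fderiv ℝ (fun x : H => ‖x‖ ^ p) = fun x => p • (‖x‖ ^ (p - 2) • innerSL ℝ x) :=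
    funext fun x => by rw [fderiv_norm_rpow x hp1, mul_smul]
  refine ⟨?_, fun x v => by simp [hfderiv, mul_assoc], fun x v w => ?_⟩
  · rw [show (2 : WithTop ℕ∞) = 1 + 1 from rfl, contDiff_succ_iff_fderiv, hfderiv]
    exact ⟨differentiable_norm_rpow hp1, by simp,
      (contDiff_one_norm_rpow_smul hq (innerSL ℝ)).const_smul p⟩
  have hsecond : HasFDerivAt (fun y : H => fderiv ℝ (fun z : H => ‖z‖ ^ p) y v)
      (p • (ContinuousLinearMap.apply ℝ ℝ v).comp (fderivNormRpowSmul (p - 2) (innerSL ℝ) x))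
      x := by
    rw [hfderiv]
    exact ((ContinuousLinearMap.apply ℝ ℝ v).hasFDerivAt.comp x
      (hasFDerivAt_norm_rpow_smul hq (innerSL ℝ) x)).const_smul p
  rw [hsecond.fderiv]
  simp only [smul_apply, ContinuousLinearMap.comp_apply, ContinuousLinearMap.apply_apply,
    fderivNormRpowSmul_apply, add_apply, smul_eq_mul]
  rw [innerSL_apply_apply, innerSL_apply_apply, real_inner_comm v w,
    show p - 2 - 2 = p - 4 by ring]
  ring

/-- For `p ∈ [2,∞)` and a real Hilbert space `H`, the function `F(x) = ‖x‖^p`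
is twice continuously Fréchet differentiable with
`F'(x)(v) = p ‖x‖^(p-2) ⟨x,v⟩` and
`F''(x)(v,w) = p ‖x‖^(p-2) ⟨v,w⟩ + p (p-2) ‖x‖^(p-4) ⟨x,v⟩ ⟨x,w⟩`,
where the real powers at `x = 0` follow the conventions `0^0 = 1` and
`0^t = 0` for `t ≠ 0` of the real power function. -/
theorem norm_rpow_contDiff_two_and_derivs
    {H : Type*} [NormedAddCommGroup H] [InnerProductSpace ℝ H] [CompleteSpace H]
    (p : ℝ) (hp : 2 ≤ p) :
    ContDiff ℝ 2 (fun x : H => ‖x‖ ^ p) ∧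
    (∀ x v : H, fderiv ℝ (fun x : H => ‖x‖ ^ p) x v
        = p * ‖x‖ ^ (p - 2) * ⟪x, v⟫) ∧
    (∀ x v w : H,
        fderiv ℝ (fun y : H => fderiv ℝ (fun z : H => ‖z‖ ^ p) y v) x w
          = p * ‖x‖ ^ (p - 2) * ⟪v, w⟫
            + p * (p - 2) * ‖x‖ ^ (p - 4) * ⟪x, v⟫ * ⟪x, w⟫) :=
  norm_rpow_contDiff_two_and_derivs_general p hp
end

section
/- Let p ∈ [2,∞) and let (H, ⟨·,·⟩, ‖·‖) be a real Hilbert space. Then the function G : H × H → ℝ given by G(x, y) = ‖x − y‖^p is twice continuously Fréchet differentiable and for all x, y, v, w ∈ H it holds that (∂G/∂x)(x,y)(v) = −(∂G/∂y)(x,y)(v) = p‖x−y‖^{p−2}⟨x−y, v⟩ and (∂²G/∂x²)(x,y)(v,w) = (∂²G/∂y²)(x,y)(v,w) = −((∂/∂y)(∂/∂x)G)(x,y)(v,w) = p‖x−y‖^{p−2}⟨v, w⟩ + p(p−2)‖x−y‖^{p−4}⟨x−y, v⟩⟨x−y, w⟩, where at x = y the right-hand sides are interpreted with the conventions 0⁰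 = 1 and 0·∞ = 0. -/
/-!
Write `G(x, y) = g(x - y)` with `g z = ‖z‖ ^ p`, so that the partial derivatives of `G` are `±` the
derivatives of `g` at `x - y`, and `g' z = p ‖z‖ ^ (p - 2) ⟪z, ·⟫`. Away from `0` the
product rule differentiates it once more. At `0` the factor `p ‖z‖ ^ (p - 2)` is only continuous,
but since it multiplies a linear map in `z` this is enough for differentiability there. The
resulting `g''` is continuous at `0` because its rank-one part has norm `p (p - 2) ‖z‖ ^ (p - 2)`.
-/

open Asymptotics Filter Topology
open scoped RealInnerProductSpace

section

variable {𝕜 E F : Type*} [NontriviallyNormedField 𝕜] [NormedAddCommGroup E] [NormedSpace 𝕜 E]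
  [NormedAddCommGroup F] [NormedSpace 𝕜 F]

theorem ContinuousAt.hasFDerivAt_smul_clm_zero {φ : E → 𝕜} (hφ : ContinuousAt φ 0)
    (L : E →L[𝕜] F) : HasFDerivAt (fun z => φ z • L z) (φ 0 • L) 0 := by
  refine .of_isLittleO ?_
  have h : (fun z => φ z - φ 0) =o[𝓝 0] (fun _ => (1 : 𝕜)) :=
    (isLittleO_one_iff 𝕜).mpr (tendsto_sub_nhds_zero_iff.mpr hφ)
  simpa [sub_smul] using h.smul_isBigO (L.isBigO_id _)

theorem HasFDerivAt.comp_const_sub {f : E → F} {f' : E →L[𝕜] F} {a x : E}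
    (hf : HasFDerivAt f f' (a - x)) : HasFDerivAt (fun y => f (a - y)) (-f') x := by
  simpa [Function.comp_def] using hf.comp x ((hasFDerivAt_id x).const_sub a)

theorem HasFDerivAt.clm_apply_const {G : Type*} [NormedAddCommGroup G] [NormedSpace 𝕜 G]
    {c : E → F →L[𝕜] G} {c' : E →L[𝕜] F →L[𝕜] G} {x : E} (hc : HasFDerivAt c c' x) (v : F) :
    HasFDerivAt (fun y => c y v) (c'.flip v) x := by
  simpa using hc.clm_apply (hasFDerivAt_const v x)

end

section

variable {E F : Type*} [NormedAddCommGroup E] [NormedAddCommGroup F] [NormedSpace ℝ F]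

theorem continuous_norm_rpow_smul_of_norm_le_mul_sq {B : E → F} (hB : Continuous B) {C : ℝ}
    (hBC : ∀ z, ‖B z‖ ≤ C * ‖z‖ ^ 2) {r : ℝ} (hr : -2 < r) :
    Continuous fun z => ‖z‖ ^ r • B z := by
  refine continuous_iff_continuousAt.2 fun z => ?_
  rcases eq_or_ne z 0 with rfl | hz
  · have hB0 : B 0 = 0 := norm_le_zero_iff.1 (by simpa using hBC 0)
    have hlim : Tendsto (fun z : E => C * ‖z‖ ^ (r + 2)) (𝓝 0) (𝓝 0) := by
      simpa [Real.zero_rpow (by linarith : r + 2 ≠ 0)] using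
        ((continuous_norm.rpow_const (p := r + 2) fun _ => .inr (by linarith)).tendsto
          (0 : E)).const_mul C
    rw [ContinuousAt, hB0, smul_zero]
    refine squeeze_zero_norm (fun z => ?_) hlim
    calc ‖‖z‖ ^ r • B z‖ = ‖z‖ ^ r * ‖B z‖ := by
          rw [norm_smul, Real.norm_of_nonneg (by positivity)]
      _ ≤ ‖z‖ ^ r * (C * ‖z‖ ^ 2) := by gcongr; exact hBC z
      _ = C * ‖z‖ ^ (r + 2) := by
          rw [show r + 2 = r + (2 : ℕ) by norm_num,
            Real.rpow_add_natCast' (norm_nonneg z) (by norm_num; linarith)]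
          ring
  · exact ((continuous_norm.continuousAt).rpow_const (.inl (norm_ne_zero_iff.2 hz))).smul
      hB.continuousAt

end

section

variable {E : Type*} [NormedAddCommGroup E] [InnerProductSpace ℝ E]

theorem hasFDerivAt_norm_rpow_of_ne_zero {x : E} (hx : x ≠ 0) (p : ℝ) :
    HasFDerivAt (fun x : E => ‖x‖ ^ p) ((p * ‖x‖ ^ (p - 2)) • innerSL ℝ x) x := by
  convert ((hasStrictFDerivAt_norm_sq x).rpow_const (p := p / 2) (by simp [hx])).hasFDerivAt
    using 1
  · ext y
    rw [← Real.rpow_natCast_mul (norm_nonneg _)]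
    ring_nf
  · simp_rw [← Real.rpow_natCast_mul (norm_nonneg _), ← Nat.cast_smul_eq_nsmul ℝ, smul_smul]
    ring_nf

-- `innerSL ℝ` is typed as a conjugate-linear map, so it cannot be added to real bilinear maps.
variable (E) in
noncomputable def realInnerSL : E →L[ℝ] E →L[ℝ] ℝ := innerSL ℝ

@[simp] theorem realInnerSL_apply_apply (v w : E) : realInnerSL E v w = ⟪v, w⟫ := rfl

noncomputable def normRpowHessian (p : ℝ) (z : E) : E →L[ℝ] E →L[ℝ] ℝ :=
  (p * ‖z‖ ^ (p - 2)) • realInnerSL E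
    + (p * (p - 2) * ‖z‖ ^ (p - 4)) • (innerSL ℝ z).smulRight (innerSL ℝ z)

theorem normRpowHessian_apply (p : ℝ) (z v w : E) :
    normRpowHessian p z w v
      = p * ‖z‖ ^ (p - 2) * ⟪v, w⟫ + p * (p - 2) * ‖z‖ ^ (p - 4) * ⟪z, v⟫ * ⟪z, w⟫ := by
  simp only [normRpowHessian, add_apply, smul_apply, ContinuousLinearMap.smulRight_apply,
    coe_innerSL_apply, realInnerSL_apply_apply, real_inner_comm v w, smul_eq_mul, add_right_inj]
  ring

theorem hasFDerivAt_fderiv_norm_rpow {p : ℝ} (hp : 2 ≤ p) (z : E) :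
    HasFDerivAt (fderiv ℝ fun x : E => ‖x‖ ^ p) (normRpowHessian p z) z := by
  have hD : (fderiv ℝ fun x : E => ‖x‖ ^ p) = fun x => (p * ‖x‖ ^ (p - 2)) • realInnerSL E x :=
    funext fun x => fderiv_norm_rpow x (by linarith)
  rw [hD]
  rcases eq_or_ne z 0 with rfl | hz
  · have hφ : ContinuousAt (fun z : E => p * ‖z‖ ^ (p - 2)) 0 :=
      (continuous_const.mul (continuous_norm.rpow_const fun _ => .inr (by linarith))).continuousAt
    refine (hφ.hasFDerivAt_smul_clm_zero (realInnerSL E)).congr_fderiv ?_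
    ext w v
    simp [normRpowHessian_apply, real_inner_comm]
  · refine (((hasFDerivAt_norm_rpow_of_ne_zero hz (p - 2)).const_mul p).smul
      (realInnerSL E).hasFDerivAt).congr_fderiv ?_
    ext w v
    simp only [add_apply, smul_apply, ContinuousLinearMap.smulRight_apply, coe_innerSL_apply,
      smul_eq_mul, realInnerSL_apply_apply, normRpowHessian_apply, real_inner_comm, add_right_inj]
    rw [show p - 2 - 2 = p - 4 by ring]
    ring

theorem norm_innerSL_smulRight_innerSL (z : E) :
    ‖(innerSL ℝ z).smulRight (innerSL ℝ z)‖ = ‖z‖ ^ 2 := by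
  rw [ContinuousLinearMap.norm_smulRight_apply, innerSL_apply_norm, sq]

theorem continuous_innerSL_smulRight_innerSL :
    Continuous fun z : E => (innerSL ℝ z).smulRight (innerSL ℝ z) :=
  ((ContinuousLinearMap.smulRightL ℝ E _).continuous.comp (innerSL ℝ).continuous).clm_apply
    (innerSL ℝ).continuous

theorem continuous_normRpowHessian {p : ℝ} (hp : 2 ≤ p) :
    Continuous (normRpowHessian p : E → E →L[ℝ] E →L[ℝ] ℝ) := by
  have hfirst : Continuous fun z : E => (p * ‖z‖ ^ (p - 2)) • realInnerSL E :=
    (continuous_const.mul (continuous_norm.rpow_const fun _ => .inr (by linarith))).smul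
      continuous_const
  rcases hp.eq_or_lt with rfl | hp
  · convert hfirst using 1
    ext z w v
    simp [normRpowHessian_apply, real_inner_comm]
  · have hsecond : Continuous fun z : E =>
        (p * (p - 2) * ‖z‖ ^ (p - 4)) • (innerSL ℝ z).smulRight (innerSL ℝ z) := by
      have h := continuous_norm_rpow_smul_of_norm_le_mul_sq (F := E →L[ℝ] E →L[ℝ] ℝ)
        continuous_innerSL_smulRight_innerSL (C := 1)
        (fun z => by rw [one_mul, norm_innerSL_smulRight_innerSL]) (r := p - 4) (by linarith)
      simp_rw [mul_smul (p * (p - 2))]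
      exact (continuous_const (y := p * (p - 2))).smul h
    -- not found by instance search
    have : ContinuousAdd (E →L[ℝ] E →L[ℝ] ℝ) :=
      ContinuousLinearMap.topologicalAddGroup.toContinuousAdd
    exact hfirst.add hsecond

theorem contDiff_two_norm_rpow {p : ℝ} (hp : 2 ≤ p) : ContDiff ℝ 2 fun x : E => ‖x‖ ^ p := by
  rw [show (2 : WithTop ℕ∞) = 1 + 1 from rfl, contDiff_succ_iff_fderiv]
  refine ⟨differentiable_norm_rpow (by linarith), by simp, contDiff_one_iff_fderiv.2
    ⟨fun z => (hasFDerivAt_fderiv_norm_rpow hp z).differentiableAt, ?_⟩⟩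
  rw [show fderiv ℝ (fderiv ℝ fun x : E => ‖x‖ ^ p) = normRpowHessian p from
    funext fun z => (hasFDerivAt_fderiv_norm_rpow hp z).fderiv]
  exact continuous_normRpowHessian hp

end

theorem norm_sub_rpow_contDiff_two_and_partial_derivs_general
    {H : Type*} [NormedAddCommGroup H] [InnerProductSpace ℝ H]
    (p : ℝ) (hp : 2 ≤ p) :
    ContDiff ℝ 2 (fun q : H × H => ‖q.1 - q.2‖ ^ p) ∧
    (∀ x y v : H,
      fderiv ℝ (fun x' : H => ‖x' - y‖ ^ p) x v
        = p * ‖x - y‖ ^ (p - 2) * ⟪x - y, v⟫ ∧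
      fderiv ℝ (fun y' : H => ‖x - y'‖ ^ p) y v
        = -(p * ‖x - y‖ ^ (p - 2) * ⟪x - y, v⟫)) ∧
    (∀ x y v w : H,
      fderiv ℝ (fun x'' : H => fderiv ℝ (fun x' : H => ‖x' - y‖ ^ p) x'' v) x w
        = p * ‖x - y‖ ^ (p - 2) * ⟪v, w⟫
          + p * (p - 2) * ‖x - y‖ ^ (p - 4) * ⟪x - y, v⟫ * ⟪x - y, w⟫ ∧
      fderiv ℝ (fun y'' : H => fderiv ℝ (fun y' : H => ‖x - y'‖ ^ p) y'' v) y w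
        = p * ‖x - y‖ ^ (p - 2) * ⟪v, w⟫
          + p * (p - 2) * ‖x - y‖ ^ (p - 4) * ⟪x - y, v⟫ * ⟪x - y, w⟫ ∧
      fderiv ℝ (fun y' : H => fderiv ℝ (fun x' : H => ‖x' - y'‖ ^ p) x v) y w
        = -(p * ‖x - y‖ ^ (p - 2) * ⟪v, w⟫
            + p * (p - 2) * ‖x - y‖ ^ (p - 4) * ⟪x - y, v⟫ * ⟪x - y, w⟫)) := by
  have hp1 : 1 < p := by linarith
  have hdx (x y : H) :
      fderiv ℝ (fun x' => ‖x' - y‖ ^ p) x = fderiv ℝ (fun z : H => ‖z‖ ^ p) (x - y) :=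
    fderiv_comp_sub (f := fun z : H => ‖z‖ ^ p) y
  have hdy (x y : H) :
      fderiv ℝ (fun y' => ‖x - y'‖ ^ p) y = -fderiv ℝ (fun z : H => ‖z‖ ^ p) (x - y) :=
    (differentiable_norm_rpow hp1 (x - y)).hasFDerivAt.comp_const_sub.fderiv
  simp only [hdx, hdy, neg_apply, fderiv_fun_neg]
  refine ⟨(contDiff_two_norm_rpow hp).comp (contDiff_fst.sub contDiff_snd),
    fun x y v => ?_, fun x y v w => ?_⟩
  · simp only [fderiv_norm_rpow _ hp1, smul_apply, innerSL_apply_apply, smul_eq_mul, and_self]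
  have hdxx := ((hasFDerivAt_comp_sub y).2
    (hasFDerivAt_fderiv_norm_rpow hp (x - y))).clm_apply_const v
  have hdyx := (hasFDerivAt_fderiv_norm_rpow hp (x - y)).comp_const_sub.clm_apply_const v
  rw [hdxx.fderiv, hdyx.fderiv]
  simp [normRpowHessian_apply]

/-- For `p ∈ [2,∞)` and a real Hilbert space `H`, the function
`G(x,y) = ‖x-y‖^p` on `H × H` is twice continuously Fréchet differentiable and
its partial Fréchet derivatives satisfy
`(∂G/∂x)(x,y)(v) = -(∂G/∂y)(x,y)(v) = p ‖x-y‖^(p-2) ⟨x-y,v⟩` and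
`(∂²G/∂x²)(x,y)(v,w) = (∂²G/∂y²)(x,y)(v,w) = -((∂/∂y)(∂/∂x)G)(x,y)(v,w)
  = p ‖x-y‖^(p-2) ⟨v,w⟩ + p (p-2) ‖x-y‖^(p-4) ⟨x-y,v⟩ ⟨x-y,w⟩`,
where the real powers at `x = y` follow the conventions `0^0 = 1` and
`0^t = 0` for `t ≠ 0` of the real power function. -/
theorem norm_sub_rpow_contDiff_two_and_partial_derivs
    {H : Type*} [NormedAddCommGroup H] [InnerProductSpace ℝ H] [CompleteSpace H]
    (p : ℝ) (hp : 2 ≤ p) :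
    ContDiff ℝ 2 (fun q : H × H => ‖q.1 - q.2‖ ^ p) ∧
    (∀ x y v : H,
      fderiv ℝ (fun x' : H => ‖x' - y‖ ^ p) x v
        = p * ‖x - y‖ ^ (p - 2) * ⟪x - y, v⟫ ∧
      fderiv ℝ (fun y' : H => ‖x - y'‖ ^ p) y v
        = -(p * ‖x - y‖ ^ (p - 2) * ⟪x - y, v⟫)) ∧
    (∀ x y v w : H,
      fderiv ℝ (fun x'' : H => fderiv ℝ (fun x' : H => ‖x' - y‖ ^ p) x'' v) x w
        = p * ‖x - y‖ ^ (p - 2) * ⟪v, w⟫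
          + p * (p - 2) * ‖x - y‖ ^ (p - 4) * ⟪x - y, v⟫ * ⟪x - y, w⟫ ∧
      fderiv ℝ (fun y'' : H => fderiv ℝ (fun y' : H => ‖x - y'‖ ^ p) y'' v) y w
        = p * ‖x - y‖ ^ (p - 2) * ⟪v, w⟫
          + p * (p - 2) * ‖x - y‖ ^ (p - 4) * ⟪x - y, v⟫ * ⟪x - y, w⟫ ∧
      fderiv ℝ (fun y' : H => fderiv ℝ (fun x' : H => ‖x' - y'‖ ^ p) x v) y w
        = -(p * ‖x - y‖ ^ (p - 2) * ⟪v, w⟫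
            + p * (p - 2) * ‖x - y‖ ^ (p - 4) * ⟪x - y, v⟫ * ⟪x - y, w⟫)) :=
  norm_sub_rpow_contDiff_two_and_partial_derivs_general p hp
end

section
/- Let d, m ∈ ℕ, let O ⊆ ℝ^d be a nonempty open convex set, and let μ : O → ℝ^d and σ : O → ℝ^{d×m} be continuously differentiable. Then for every p ∈ [1,∞) it holds (with suprema taken in [−∞,∞]) that sup_{x ∈ O} sup_{v ∈ ℝ^d∖{0}} [ (⟨v, μ'(x)v⟩ + ½‖σ'(x)v‖²_{HS(ℝ^m,ℝ^d)}) / ‖v‖² + (p/2 − 1)·‖(σ'(x)v)^* v‖² / ‖v‖⁴ ] is EQUAL to sup_{x, y ∈ O, x ≠ y} [ (⟨x−y, μ(x)−μ(y)⟩ + ½‖σ(x)−σ(y)‖²_{HS(ℝ^m,ℝ^d)}) / ‖x−y‖² + (p/2 − 1)·‖(σ(x)−σ(y))^*(x−y)‖² / ‖x−y‖⁴ ]. -/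
/-!
Both suprema run over the same quotient `driftDiffusionQuotient p u a b`, evaluated at
`(v, μ'(x) v, σ'(x) v)` on the left and at `(x - y, μ x - μ y, σ x - σ y)` on the right.
The quotient is invariant under `(u, a, b) ↦ (t u, t a, t b)`, so each derivative term is the
limit of the difference terms at `(x + t v, x)` as `t → 0`. Conversely, its numerator
`⟪u, a⟫ + ∑ i, diffusionForm p u (b i)` is linear in `a` and, for `p ≥ 1`, convex in each `b i`;
writing `μ x - μ y` and `σ i x - σ i y` as averages of derivatives along the segment `[y, x]`,
Jensen's inequality bounds the difference term by the supremum of the derivative terms.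
-/

open scoped RealInnerProductSpace

open MeasureTheory Set Filter Topology

section

variable {E : Type*} [NormedAddCommGroup E] [InnerProductSpace ℝ E] {m : ℕ}

noncomputable def diffusionForm (p : ℝ) (u b : E) : ℝ :=
  (1 / 2) * ‖b‖ ^ 2 + (p / 2 - 1) * ⟪u, b⟫ ^ 2 / ‖u‖ ^ 2

/-- The `b i` are the columns of the diffusion matrix: `∑ i, ‖b i‖ ^ 2` is its squared
Hilbert–Schmidt norm and `∑ i, ⟪b i, u⟫ ^ 2 = ‖bᵀ u‖ ^ 2`. -/
noncomputable def driftDiffusionQuotient (p : ℝ) (u a : E) (b : Fin m → E) : ℝ :=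
  (⟪u, a⟫ + (1 / 2) * ∑ i, ‖b i‖ ^ 2) / ‖u‖ ^ 2
    + (p / 2 - 1) * (∑ i, ⟪b i, u⟫ ^ 2) / ‖u‖ ^ 4

theorem driftDiffusionQuotient_eq (p : ℝ) (u a : E) (b : Fin m → E) :
    driftDiffusionQuotient p u a b = (⟪u, a⟫ + ∑ i, diffusionForm p u (b i)) / ‖u‖ ^ 2 := by
  rcases eq_or_ne u 0 with rfl | hu
  · simp [driftDiffusionQuotient]
  simp only [driftDiffusionQuotient, diffusionForm, Finset.sum_add_distrib, ← Finset.mul_sum,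
    ← Finset.sum_div, real_inner_comm u]
  field_simp
  ring

theorem driftDiffusionQuotient_smul (p : ℝ) (v a : E) (b : Fin m → E) {t : ℝ} (ht : t ≠ 0) :
    driftDiffusionQuotient p (t • v) a b
      = driftDiffusionQuotient p v (t⁻¹ • a) (fun i => t⁻¹ • b i) := by
  simp only [driftDiffusionQuotient, norm_smul, real_inner_smul_left, real_inner_smul_right,
    mul_pow, Real.norm_eq_abs, sq_abs, ← Finset.mul_sum]
  rw [show |t| ^ 4 = t ^ 4 by rw [pow_abs, abs_of_nonneg (by positivity)]]
  rcases eq_or_ne v 0 with rfl | hv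
  · simp
  field_simp

theorem norm_sub_inner_div_smul_sq (u b : E) :
    ‖b - (⟪u, b⟫ / ‖u‖ ^ 2) • u‖ ^ 2 = ‖b‖ ^ 2 - ⟪u, b⟫ ^ 2 / ‖u‖ ^ 2 := by
  rcases eq_or_ne u 0 with rfl | hu
  · simp
  rw [norm_sub_sq_real, real_inner_smul_right, norm_smul, mul_pow, Real.norm_eq_abs, sq_abs,
    div_pow, real_inner_comm b u]
  field_simp
  ring

theorem convexOn_diffusionForm {p : ℝ} (hp : 1 ≤ p) (u : E) :
    ConvexOn ℝ univ (diffusionForm p u) := by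
  let L : E →L[ℝ] E := ContinuousLinearMap.id ℝ E - (innerSL ℝ u).smulRight ((‖u‖ ^ 2)⁻¹ • u)
  have hL : ∀ b, L b = b - (⟪u, b⟫ / ‖u‖ ^ 2) • u := fun b => by
    simp [L, smul_smul, div_eq_mul_inv]
  -- weight `1/2` on the part of `b` orthogonal to `u`, weight `(p - 1)/2` on its part along `u`
  have hdecomp : diffusionForm p u = fun b =>
      (1 / 2) * ‖L b‖ ^ 2 + ((p - 1) / 2 / ‖u‖ ^ 2) * (innerSL ℝ u b) ^ 2 := by
    funext b
    rw [hL, norm_sub_inner_div_smul_sq, innerSL_apply_apply, diffusionForm]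
    ring
  have hsq : ConvexOn ℝ univ (fun b : E => ‖b‖ ^ 2) :=
    convexOn_univ_norm.pow (fun _ _ => norm_nonneg _) 2
  rw [hdecomp]
  refine ConvexOn.add ?_ ?_
  · exact (hsq.comp_linearMap L.toLinearMap).smul (by norm_num)
  · have hinner : ConvexOn ℝ univ (fun b : E => (innerSL ℝ u b) ^ 2) :=
      (Even.convexOn_pow (𝕜 := ℝ) even_two).comp_linearMap (innerSL ℝ u).toLinearMap
    exact hinner.smul (div_nonneg (by linarith) (sq_nonneg _))

theorem continuous_diffusionForm (p : ℝ) (u : E) : Continuous (diffusionForm p u) := by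
  unfold diffusionForm; fun_prop

open scoped Interval in
theorem ConvexOn.map_intervalIntegral_zero_one_le [CompleteSpace E] {g : E → ℝ}
    (hg : ConvexOn ℝ univ g) (hgc : Continuous g) {f : ℝ → E}
    (hf : ContinuousOn f (Icc 0 1)) :
    g (∫ t in (0 : ℝ)..1, f t) ≤ ∫ t in (0 : ℝ)..1, g (f t) := by
  have hfi : IntegrableOn f (Ι 0 1) :=
    (hf.integrableOn_compact isCompact_Icc).mono_set (by simp [Ioc_subset_Icc_self])
  have hgi : IntegrableOn (g ∘ f) (Ι 0 1) :=
    ((hgc.comp_continuousOn hf).integrableOn_compact isCompact_Icc).mono_set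
      (by simp [Ioc_subset_Icc_self])
  simpa only [interval_average_eq, sub_zero, inv_one, one_smul] using
    hg.map_set_average_le hgc.continuousOn isClosed_univ (by simp) (by simp)
      (by simp) hfi hgi

theorem driftDiffusionQuotient_intervalIntegral_le [CompleteSpace E] {p : ℝ} (hp : 1 ≤ p)
    {u : E} (hu : u ≠ 0) {c : ℝ} {A : ℝ → E} {B : Fin m → ℝ → E}
    (hA : ContinuousOn A (Icc 0 1)) (hB : ∀ i, ContinuousOn (B i) (Icc 0 1))
    (hle : ∀ t ∈ Icc (0 : ℝ) 1, driftDiffusionQuotient p u (A t) (fun i => B i t) ≤ c) :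
    driftDiffusionQuotient p u (∫ t in (0 : ℝ)..1, A t) (fun i => ∫ t in (0 : ℝ)..1, B i t)
      ≤ c := by
  have hu2 : 0 < ‖u‖ ^ 2 := by positivity
  have hAi : ContinuousOn (fun t => ⟪u, A t⟫) (Icc 0 1) := by fun_prop
  have hBi : ∀ i, ContinuousOn (fun t => diffusionForm p u (B i t)) (Icc 0 1) :=
    fun i => (continuous_diffusionForm p u).comp_continuousOn (hB i)
  have hpointwise : ∀ t ∈ Icc (0 : ℝ) 1, ⟪u, A t⟫ + ∑ i, diffusionForm p u (B i t) ≤ c * ‖u‖ ^ 2 :=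
    fun t ht => by simpa only [driftDiffusionQuotient_eq, div_le_iff₀ hu2] using hle t ht
  have hinner : ⟪u, ∫ t in (0 : ℝ)..1, A t⟫ = ∫ t in (0 : ℝ)..1, ⟪u, A t⟫ :=
    ((innerSL ℝ u).intervalIntegral_comp_comm (hA.intervalIntegrable_of_Icc zero_le_one)).symm
  have hjensen : ∀ i, diffusionForm p u (∫ t in (0 : ℝ)..1, B i t)
      ≤ ∫ t in (0 : ℝ)..1, diffusionForm p u (B i t) := fun i =>
    (convexOn_diffusionForm hp u).map_intervalIntegral_zero_one_le
      (continuous_diffusionForm p u) (hB i)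
  rw [driftDiffusionQuotient_eq, div_le_iff₀ hu2]
  calc ⟪u, ∫ t in (0 : ℝ)..1, A t⟫ + ∑ i, diffusionForm p u (∫ t in (0 : ℝ)..1, B i t)
      ≤ (∫ t in (0 : ℝ)..1, ⟪u, A t⟫) + ∑ i, ∫ t in (0 : ℝ)..1, diffusionForm p u (B i t) := by
        rw [hinner]; gcongr with i; exact hjensen i
    _ = ∫ t in (0 : ℝ)..1, (⟪u, A t⟫ + ∑ i, diffusionForm p u (B i t)) := by
        rw [intervalIntegral.integral_add (hAi.intervalIntegrable_of_Icc zero_le_one)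
          ((continuousOn_finsetSum _ fun i _ => hBi i).intervalIntegrable_of_Icc zero_le_one),
          intervalIntegral.integral_finsetSum fun i _ =>
            (hBi i).intervalIntegrable_of_Icc zero_le_one]
    _ ≤ ∫ _ in (0 : ℝ)..1, c * ‖u‖ ^ 2 :=
        intervalIntegral.integral_mono_on zero_le_one
          ((hAi.add (continuousOn_finsetSum _ fun i _ => hBi i)).intervalIntegrable_of_Icc
            zero_le_one)
          intervalIntegrable_const hpointwise
    _ = c * ‖u‖ ^ 2 := by simp

section Segment

variable {F G : Type*} [NormedAddCommGroup F] [NormedSpace ℝ F]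
  [NormedAddCommGroup G] [NormedSpace ℝ G] {O : Set F} {f : F → G} {x y : F}

theorem ContDiffOn.continuousOn_fderiv_segment (hf : ContDiffOn ℝ 1 f O) (hO : IsOpen O)
    (hconv : Convex ℝ O) (hx : x ∈ O) (hy : y ∈ O) :
    ContinuousOn (fun t : ℝ => fderiv ℝ f (y + t • (x - y)) (x - y)) (Icc 0 1) :=
  ((hf.continuousOn_fderiv_of_isOpen hO le_rfl).comp (by fun_prop)
    fun _ ht => hconv.add_smul_sub_mem hy hx ht).clm_apply continuousOn_const

theorem ContDiffOn.sub_eq_integral_fderiv_segment [CompleteSpace G] (hf : ContDiffOn ℝ 1 f O)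
    (hO : IsOpen O) (hconv : Convex ℝ O) (hx : x ∈ O) (hy : y ∈ O) :
    f x - f y = ∫ t in (0 : ℝ)..1, fderiv ℝ f (y + t • (x - y)) (x - y) := by
  have hderiv : ∀ t ∈ uIcc (0 : ℝ) 1,
      HasDerivAt (fun s : ℝ => f (y + s • (x - y))) (fderiv ℝ f (y + t • (x - y)) (x - y)) t := by
    intro t ht
    rw [uIcc_of_le zero_le_one] at ht
    have hline : HasDerivAt (fun s : ℝ => y + s • (x - y)) (x - y) t := by
      simpa using ((hasDerivAt_id t).smul_const (x - y)).const_add y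
    exact (((hf.differentiableOn one_ne_zero).differentiableAt
      (hO.mem_nhds (hconv.add_smul_sub_mem hy hx ht))).hasFDerivAt.comp_hasDerivAt t hline)
  rw [intervalIntegral.integral_eq_sub_of_hasDerivAt hderiv
    ((hf.continuousOn_fderiv_segment hO hconv hx hy).intervalIntegrable_of_Icc zero_le_one)]
  simp

end Segment

theorem continuous_driftDiffusionQuotient (p : ℝ) (u : E) :
    Continuous fun ab : E × (Fin m → E) => driftDiffusionQuotient p u ab.1 ab.2 := by
  unfold driftDiffusionQuotient; fun_prop

theorem tendsto_driftDiffusionQuotient_slope {μ : E → E} {σ : Fin m → E → E} {x : E}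
    (hμ : DifferentiableAt ℝ μ x) (hσ : ∀ i, DifferentiableAt ℝ (σ i) x) (p : ℝ) (v : E) :
    Tendsto (fun t : ℝ => driftDiffusionQuotient p (x + t • v - x) (μ (x + t • v) - μ x)
        (fun i => σ i (x + t • v) - σ i x)) (𝓝[≠] 0)
      (𝓝 (driftDiffusionQuotient p v (fderiv ℝ μ x v) (fun i => fderiv ℝ (σ i) x v))) := by
  have hslope : Tendsto (fun t : ℝ => (t⁻¹ • (μ (x + t • v) - μ x),
      fun i => t⁻¹ • (σ i (x + t • v) - σ i x))) (𝓝[≠] 0)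
      (𝓝 (fderiv ℝ μ x v, fun i => fderiv ℝ (σ i) x v)) :=
    (hμ.hasFDerivAt.hasLineDerivAt v).tendsto_slope_zero.prodMk_nhds
      (tendsto_pi_nhds.2 fun i => ((hσ i).hasFDerivAt.hasLineDerivAt v).tendsto_slope_zero)
  refine ((continuous_driftDiffusionQuotient p v).tendsto _).comp hslope |>.congr' ?_
  filter_upwards [self_mem_nhdsWithin] with t ht
  rw [add_sub_cancel_left, driftDiffusionQuotient_smul p v _ _ ht]
  rfl

theorem driftDiffusionQuotient_sub_le [CompleteSpace E] {O : Set E} (hO : IsOpen O)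
    (hconv : Convex ℝ O) {μ : E → E} {σ : Fin m → E → E} (hμ : ContDiffOn ℝ 1 μ O)
    (hσ : ∀ i, ContDiffOn ℝ 1 (σ i) O) {p : ℝ} (hp : 1 ≤ p) {c : ℝ}
    (hbound : ∀ z ∈ O, ∀ v ≠ 0,
      driftDiffusionQuotient p v (fderiv ℝ μ z v) (fun i => fderiv ℝ (σ i) z v) ≤ c)
    {x y : E} (hx : x ∈ O) (hy : y ∈ O) (hxy : x ≠ y) :
    driftDiffusionQuotient p (x - y) (μ x - μ y) (fun i => σ i x - σ i y) ≤ c := by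
  rw [hμ.sub_eq_integral_fderiv_segment hO hconv hx hy]
  simp only [fun i => (hσ i).sub_eq_integral_fderiv_segment hO hconv hx hy]
  exact driftDiffusionQuotient_intervalIntegral_le hp (sub_ne_zero.2 hxy)
    (hμ.continuousOn_fderiv_segment hO hconv hx hy)
    (fun i => (hσ i).continuousOn_fderiv_segment hO hconv hx hy)
    fun t ht => hbound _ (hconv.add_smul_sub_mem hy hx ht) _ (sub_ne_zero.2 hxy)

end

theorem sup_deriv_eq_sup_difference_quotient_general
    (d m : ℕ)
    (O : Set (EuclideanSpace ℝ (Fin d))) (hO : IsOpen O)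
    (hconv : Convex ℝ O)
    (μ : EuclideanSpace ℝ (Fin d) → EuclideanSpace ℝ (Fin d))
    (σ : Fin m → EuclideanSpace ℝ (Fin d) → EuclideanSpace ℝ (Fin d))
    (hμ : ContDiffOn ℝ 1 μ O) (hσ : ∀ i, ContDiffOn ℝ 1 (σ i) O)
    (p : ℝ) (hp : 1 ≤ p) :
    (⨆ x ∈ O, ⨆ v ∈ {v : EuclideanSpace ℝ (Fin d) | v ≠ 0},
      (((⟪v, fderiv ℝ μ x v⟫ + (1 / 2) * ∑ i, ‖fderiv ℝ (σ i) x v‖ ^ 2) / ‖v‖ ^ 2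
          + (p / 2 - 1) * (∑ i, ⟪fderiv ℝ (σ i) x v, v⟫ ^ 2) / ‖v‖ ^ 4 : ℝ) : EReal))
      = ⨆ x ∈ O, ⨆ y ∈ O, ⨆ (_ : x ≠ y),
      (((⟪x - y, μ x - μ y⟫ + (1 / 2) * ∑ i, ‖σ i x - σ i y‖ ^ 2) / ‖x - y‖ ^ 2
          + (p / 2 - 1) * (∑ i, ⟪σ i x - σ i y, x - y⟫ ^ 2) / ‖x - y‖ ^ 4 : ℝ) : EReal) := by
  change (⨆ x ∈ O, ⨆ v ∈ {v | v ≠ 0},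
      (driftDiffusionQuotient p v (fderiv ℝ μ x v) (fun i => fderiv ℝ (σ i) x v) : EReal))
    = ⨆ x ∈ O, ⨆ y ∈ O, ⨆ (_ : x ≠ y),
      (driftDiffusionQuotient p (x - y) (μ x - μ y) (fun i => σ i x - σ i y) : EReal)
  have hdiff : ∀ {f : EuclideanSpace ℝ (Fin d) → EuclideanSpace ℝ (Fin d)},
      ContDiffOn ℝ 1 f O → ∀ x ∈ O, DifferentiableAt ℝ f x := fun hf x hx =>
    (hf.differentiableOn one_ne_zero).differentiableAt (hO.mem_nhds hx)
  apply le_antisymm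
  · refine iSup₂_le fun x hx => iSup₂_le fun v (hv : v ≠ 0) => ?_
    refine le_of_tendsto ((continuous_coe_real_ereal.tendsto _).comp
      (tendsto_driftDiffusionQuotient_slope (hdiff hμ x hx) (fun i => hdiff (hσ i) x hx) p v)) ?_
    have hnear : ∀ᶠ t : ℝ in 𝓝[≠] 0, x + t • v ∈ O :=
      nhdsWithin_le_nhds ((Continuous.tendsto (by fun_prop) 0).eventually
        (by simpa using hO.mem_nhds hx))
    filter_upwards [hnear, self_mem_nhdsWithin] with t htO (ht : t ≠ 0)
    exact le_iSup₂_of_le (x + t • v) htO <| le_iSup₂_of_le x hx <|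
      le_iSup_of_le (by simp [ht, hv]) le_rfl
  · refine iSup₂_le fun x hx => iSup₂_le fun y hy => iSup_le fun hxy => ?_
    refine EReal.le_of_forall_lt_iff_le.1 fun c hc => EReal.coe_le_coe_iff.2 ?_
    refine driftDiffusionQuotient_sub_le hO hconv hμ hσ hp (fun z hz v hv => ?_) hx hy hxy
    have hle : (driftDiffusionQuotient p v (fderiv ℝ μ z v) (fun i => fderiv ℝ (σ i) z v) : EReal)
        ≤ ⨆ x ∈ O, ⨆ v ∈ {v | v ≠ 0},
          (driftDiffusionQuotient p v (fderiv ℝ μ x v) (fun i => fderiv ℝ (σ i) x v) : EReal) :=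
      le_iSup₂_of_le z hz (le_iSup₂_of_le v hv le_rfl)
    exact EReal.coe_le_coe_iff.1 (hle.trans hc.le)

/-- On a convex open set, for `p ∈ [1,∞)` the global supremum of the
derivative-based monotonicity/coercivity expression is EQUAL to the global
supremum of the corresponding difference-quotient expression (suprema in the
extended reals). -/
theorem sup_deriv_eq_sup_difference_quotient
    (d m : ℕ) (hd : 0 < d) (hm : 0 < m)
    (O : Set (EuclideanSpace ℝ (Fin d))) (hO : IsOpen O) (hOne : O.Nonempty)
    (hconv : Convex ℝ O)
    (μ : EuclideanSpace ℝ (Fin d) → EuclideanSpace ℝ (Fin d))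
    (σ : Fin m → EuclideanSpace ℝ (Fin d) → EuclideanSpace ℝ (Fin d))
    (hμ : ContDiffOn ℝ 1 μ O) (hσ : ∀ i, ContDiffOn ℝ 1 (σ i) O)
    (p : ℝ) (hp : 1 ≤ p) :
    (⨆ x ∈ O, ⨆ v ∈ {v : EuclideanSpace ℝ (Fin d) | v ≠ 0},
      (((⟪v, fderiv ℝ μ x v⟫ + (1 / 2) * ∑ i, ‖fderiv ℝ (σ i) x v‖ ^ 2) / ‖v‖ ^ 2
          + (p / 2 - 1) * (∑ i, ⟪fderiv ℝ (σ i) x v, v⟫ ^ 2) / ‖v‖ ^ 4 : ℝ) : EReal))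
      = ⨆ x ∈ O, ⨆ y ∈ O, ⨆ (_ : x ≠ y),
      (((⟪x - y, μ x - μ y⟫ + (1 / 2) * ∑ i, ‖σ i x - σ i y‖ ^ 2) / ‖x - y‖ ^ 2
          + (p / 2 - 1) * (∑ i, ⟪σ i x - σ i y, x - y⟫ ^ 2) / ‖x - y‖ ^ 4 : ℝ) : EReal) :=
  sup_deriv_eq_sup_difference_quotient_general d m O hO hconv μ σ hμ hσ p hp
end

section
/- For every p ∈ (0,1) there exist continuously differentiable functions μ, σ : ℝ → ℝ and real numbers x, y ∈ ℝ with x ≠ y such that sup_{z ∈ ℝ} ( μ'(z) + ((p−1)/2)·(σ'(z))² ) < (μ(x)−μ(y))/(x−y) + ((p−1)/2)·(σ(x)−σ(y))²/(x−y)². In other words, the identity between the supremum of the derivative-based monotonicity expression and the supremum of the corresponding difference-quotient expression (which holds for all p ∈ [1,∞) in dimension d = m = 1) fails in general for p ∈ (0,1). -/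
/-!
Take `σ = sin` and the drift `μ(z) = z - (k/4) sin 2z` with `k = (p - 1)/2 < 0`. Since
`cos 2z = 2 cos² z - 1`, the oscillation of `μ'` exactly cancels that of `k σ'²`, so
`μ' + k σ'² ≡ 1 + k/2`. Between `x = π` and `y = -π` the increment of `σ` vanishes while that
of `μ` is `2π`, so the difference-quotient expression equals `1 > 1 + k/2`.
-/

open Real

noncomputable def compensatingDrift (k z : ℝ) : ℝ := z - k / 4 * sin (2 * z)

theorem contDiff_compensatingDrift (k : ℝ) : ContDiff ℝ 1 (compensatingDrift k) := by
  unfold compensatingDrift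
  fun_prop

theorem hasDerivAt_compensatingDrift (k z : ℝ) :
    HasDerivAt (compensatingDrift k) (1 - k / 2 * cos (2 * z)) z := by
  have hsin := ((hasDerivAt_id' z).const_mul 2).sin
  exact ((hasDerivAt_id' z).sub (hsin.const_mul (k / 4))).congr_deriv (by ring)

theorem deriv_compensatingDrift_add_mul_cos_sq (k z : ℝ) :
    deriv (compensatingDrift k) z + k * cos z ^ 2 = 1 + k / 2 := by
  rw [(hasDerivAt_compensatingDrift k z).deriv, cos_two_mul]
  ring

theorem compensatingDrift_pi_sub_neg_pi (k : ℝ) :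
    compensatingDrift k π - compensatingDrift k (-π) = 2 * π := by
  simp only [compensatingDrift, mul_neg, sin_neg, sin_two_pi]
  ring

/-- For every `p ∈ (0,1)` there exist `C¹` functions `μ, σ : ℝ → ℝ` and points
`x ≠ y` such that the supremum (in the extended reals) of the derivative-based
monotonicity expression is strictly smaller than the corresponding
difference-quotient expression; i.e. the identity valid for `p ∈ [1,∞)` fails
for `p ∈ (0,1)`. -/
theorem deriv_sup_lt_difference_quotient_of_p_lt_one
    (p : ℝ) (hp : p ∈ Set.Ioo (0 : ℝ) 1) :
    ∃ (μ σ : ℝ → ℝ) (x y : ℝ), ContDiff ℝ 1 μ ∧ ContDiff ℝ 1 σ ∧ x ≠ y ∧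
      (⨆ z : ℝ, ((deriv μ z + (p - 1) / 2 * (deriv σ z) ^ 2 : ℝ) : EReal))
        < (((μ x - μ y) / (x - y)
            + (p - 1) / 2 * (σ x - σ y) ^ 2 / (x - y) ^ 2 : ℝ) : EReal) := by
  refine ⟨compensatingDrift ((p - 1) / 2), sin, π, -π, contDiff_compensatingDrift _,
    contDiff_sin, by linarith [pi_pos], ?_⟩
  simp only [Real.deriv_sin, deriv_compensatingDrift_add_mul_cos_sq, iSup_const,
    EReal.coe_lt_coe_iff, compensatingDrift_pi_sub_neg_pi, sin_neg, sin_pi, sub_neg_eq_add,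
    ← two_mul]
  norm_num [pi_ne_zero]
  linarith [hp.2]
end

section
/- Let D ⊆ ℝ² be a nonempty bounded measurable set equipped with Lebesgue measure. Then for all u₁, v₁ ∈ L⁶(D; ℝ) and all u₂, v₂ ∈ L²(D; ℝ) it holds that ∫_D (u₂(s) − v₂(s)) (v₁(s)³ − u₁(s)³) ds ≤ 6 (‖u₁‖²_{L⁶(D;ℝ)} + ‖v₁‖²_{L⁶(D;ℝ)}) (‖u₁ − v₁‖²_{L⁶(D;ℝ)} + ‖u₂ − v₂‖²_{L²(D;ℝ)}). (Note that u₁³, v₁³ ∈ L²(D;ℝ) since u₁, v₁ ∈ L⁶(D;ℝ), so the integral is well defined.) -/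
open MeasureTheory
open scoped ENNReal

/-!
Factor `v³ - u³ = (v - u)(v² + vu + u²)`. Hölder with exponents `1/3 = 1/6 + 1/6` bounds the
quadratic factor in `L³` by `‖v‖₆² + ‖v‖₆‖u‖₆ + ‖u‖₆²`, Hölder with `1/2 = 1/6 + 1/3` then bounds
`v³ - u³` in `L²`, and Cauchy–Schwarz bounds the integrand in `L¹`. The constant then comes from
`b² + ba + a² ≤ 2 (a² + b²)` and `ec ≤ c² + e²`.
-/

namespace ENNReal

instance holderTriple_six_six_three : HolderTriple 6 6 3 :=
  ⟨by
    rw [← toReal_eq_toReal_iff' (by finiteness) (by finiteness), toReal_add (by simp) (by simp)]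
    norm_num⟩

instance holderTriple_six_three_two : HolderTriple 6 3 2 :=
  ⟨by
    rw [← toReal_eq_toReal_iff' (by finiteness) (by finiteness), toReal_add (by simp) (by simp)]
    norm_num⟩

end ENNReal

section

variable {α : Type*} [MeasurableSpace α] {μ : Measure α}

theorem integral_le_toReal_of_eLpNorm_one_le {f : α → ℝ} {M : ℝ≥0∞}
    (hfM : eLpNorm f 1 μ ≤ M) (hM : M ≠ ∞) : ∫ x, f x ∂μ ≤ M.toReal := by
  have h : ‖∫ x, f x ∂μ‖ₑ ≤ eLpNorm f 1 μ := by
    rw [eLpNorm_one_eq_lintegral_enorm]; exact enorm_integral_le_lintegral_enorm f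
  calc ∫ x, f x ∂μ ≤ ‖∫ x, f x ∂μ‖ := Real.le_norm_self _
    _ = ‖∫ x, f x ∂μ‖ₑ.toReal := by simp
    _ ≤ M.toReal := ENNReal.toReal_mono hM (h.trans hfM)

theorem eLpNorm_mul_le_mul_eLpNorm {𝕜 : Type*} [NormedRing 𝕜] {p q r : ℝ≥0∞} [p.HolderTriple q r]
    {f g : α → 𝕜} (hf : AEStronglyMeasurable f μ) (hg : AEStronglyMeasurable g μ) :
    eLpNorm (fun x => f x * g x) r μ ≤ eLpNorm f p μ * eLpNorm g q μ := by
  simpa using eLpNorm_le_eLpNorm_mul_eLpNorm'_of_norm hf hg (· * ·) 1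
    (.of_forall fun x => by simpa using norm_mul_le (f x) (g x))

variable {𝕜 : Type*} [NormedCommRing 𝕜] {u v : α → 𝕜}

theorem eLpNorm_mul_self_add_mul_add_mul_self_le (hu : AEStronglyMeasurable u μ)
    (hv : AEStronglyMeasurable v μ) :
    eLpNorm (fun x => v x * v x + v x * u x + u x * u x) 3 μ ≤
      eLpNorm v 6 μ * eLpNorm v 6 μ + eLpNorm v 6 μ * eLpNorm u 6 μ
        + eLpNorm u 6 μ * eLpNorm u 6 μ := by
  calc _ ≤ eLpNorm (fun x => v x * v x + v x * u x) 3 μ + eLpNorm (fun x => u x * u x) 3 μ :=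
        eLpNorm_add_le ((hv.mul hv).add (hv.mul hu)) (hu.mul hu) (by norm_num)
    _ ≤ eLpNorm (fun x => v x * v x) 3 μ + eLpNorm (fun x => v x * u x) 3 μ
          + eLpNorm (fun x => u x * u x) 3 μ := by
        gcongr; exact eLpNorm_add_le (hv.mul hv) (hv.mul hu) (by norm_num)
    _ ≤ _ := add_le_add (add_le_add (eLpNorm_mul_le_mul_eLpNorm hv hv)
          (eLpNorm_mul_le_mul_eLpNorm hv hu)) (eLpNorm_mul_le_mul_eLpNorm hu hu)

theorem eLpNorm_cube_sub_cube_le (hu : AEStronglyMeasurable u μ)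
    (hv : AEStronglyMeasurable v μ) :
    eLpNorm (fun x => v x ^ 3 - u x ^ 3) 2 μ ≤
      eLpNorm (u - v) 6 μ * (eLpNorm v 6 μ * eLpNorm v 6 μ + eLpNorm v 6 μ * eLpNorm u 6 μ
        + eLpNorm u 6 μ * eLpNorm u 6 μ) := by
  have factor : (fun x => v x ^ 3 - u x ^ 3) =
      fun x => (v x - u x) * (v x * v x + v x * u x + u x * u x) := by
    funext x; ring
  rw [factor, eLpNorm_sub_comm]
  calc _ ≤ eLpNorm (v - u) 6 μ * eLpNorm (fun x => v x * v x + v x * u x + u x * u x) 3 μ :=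
        eLpNorm_mul_le_mul_eLpNorm (hv.sub hu) (((hv.mul hv).add (hv.mul hu)).add (hu.mul hu))
    _ ≤ _ := by gcongr; exact eLpNorm_mul_self_add_mul_add_mul_self_le hu hv

end

theorem mul_mul_mul_self_add_mul_add_mul_self_le (a b c e : ℝ) :
    e * (c * (b * b + b * a + a * a)) ≤ 6 * (a ^ 2 + b ^ 2) * (c ^ 2 + e ^ 2) := by
  have hq : 0 ≤ b * b + b * a + a * a := by
    nlinarith [sq_nonneg (a + b), sq_nonneg a, sq_nonneg b]
  have hq' : b * b + b * a + a * a ≤ 2 * (a ^ 2 + b ^ 2) := by nlinarith [sq_nonneg (a + b)]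
  have hce : e * c ≤ c ^ 2 + e ^ 2 := by nlinarith [sq_nonneg (c - e)]
  calc e * (c * (b * b + b * a + a * a)) = e * c * (b * b + b * a + a * a) := by ring
    _ ≤ (c ^ 2 + e ^ 2) * (2 * (a ^ 2 + b ^ 2)) := by gcongr
    _ ≤ 6 * (a ^ 2 + b ^ 2) * (c ^ 2 + e ^ 2) := by
        nlinarith [sq_nonneg a, sq_nonneg b, sq_nonneg c, sq_nonneg e]

theorem wave_cubic_nonlinearity_estimate_general
    (D : Set (EuclideanSpace ℝ (Fin 2)))
    (u₁ v₁ u₂ v₂ : EuclideanSpace ℝ (Fin 2) → ℝ)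
    (hu₁ : MemLp u₁ 6 (volume.restrict D)) (hv₁ : MemLp v₁ 6 (volume.restrict D))
    (hu₂ : MemLp u₂ 2 (volume.restrict D)) (hv₂ : MemLp v₂ 2 (volume.restrict D)) :
    ∫ s in D, (u₂ s - v₂ s) * ((v₁ s) ^ 3 - (u₁ s) ^ 3)
      ≤ 6 * ((eLpNorm u₁ 6 (volume.restrict D)).toReal ^ 2
              + (eLpNorm v₁ 6 (volume.restrict D)).toReal ^ 2)
          * ((eLpNorm (u₁ - v₁) 6 (volume.restrict D)).toReal ^ 2
              + (eLpNorm (u₂ - v₂) 2 (volume.restrict D)).toReal ^ 2) := by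
  set μ := volume.restrict D
  have hA : eLpNorm u₁ 6 μ ≠ ∞ := hu₁.2.ne
  have hB : eLpNorm v₁ 6 μ ≠ ∞ := hv₁.2.ne
  have hC : eLpNorm (u₁ - v₁) 6 μ ≠ ∞ := (hu₁.sub hv₁).2.ne
  have hE : eLpNorm (u₂ - v₂) 2 μ ≠ ∞ := (hu₂.sub hv₂).2.ne
  have key : eLpNorm (fun s => (u₂ s - v₂ s) * (v₁ s ^ 3 - u₁ s ^ 3)) 1 μ ≤
      eLpNorm (u₂ - v₂) 2 μ * (eLpNorm (u₁ - v₁) 6 μ * (eLpNorm v₁ 6 μ * eLpNorm v₁ 6 μ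
        + eLpNorm v₁ 6 μ * eLpNorm u₁ 6 μ + eLpNorm u₁ 6 μ * eLpNorm u₁ 6 μ)) :=
    (eLpNorm_mul_le_mul_eLpNorm (p := 2) (q := 2) (hu₂.1.sub hv₂.1)
      ((hv₁.1.pow 3).sub (hu₁.1.pow 3))).trans
      (mul_le_mul_right (eLpNorm_cube_sub_cube_le hu₁.1 hv₁.1) _)
  calc _ ≤ _ := integral_le_toReal_of_eLpNorm_one_le key (by finiteness)
    _ ≤ _ := by
      rw [ENNReal.toReal_mul, ENNReal.toReal_mul,
        ENNReal.toReal_add (by finiteness) (by finiteness),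
        ENNReal.toReal_add (by finiteness) (by finiteness)]
      simp only [ENNReal.toReal_mul]
      exact mul_mul_mul_self_add_mul_add_mul_self_le _ _ _ _

/-- Estimate controlling the cubic nonlinearity `u ↦ -u³` of a stochastic
non-linear wave equation in terms of `L⁶` and `L²` norms on a nonempty bounded
measurable set `D ⊆ ℝ²`. -/
theorem wave_cubic_nonlinearity_estimate
    (D : Set (EuclideanSpace ℝ (Fin 2))) (hD : D.Nonempty)
    (hDb : Bornology.IsBounded D) (hDm : MeasurableSet D)
    (u₁ v₁ u₂ v₂ : EuclideanSpace ℝ (Fin 2) → ℝ)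
    (hu₁ : MemLp u₁ 6 (volume.restrict D)) (hv₁ : MemLp v₁ 6 (volume.restrict D))
    (hu₂ : MemLp u₂ 2 (volume.restrict D)) (hv₂ : MemLp v₂ 2 (volume.restrict D)) :
    ∫ s in D, (u₂ s - v₂ s) * ((v₁ s) ^ 3 - (u₁ s) ^ 3)
      ≤ 6 * ((eLpNorm u₁ 6 (volume.restrict D)).toReal ^ 2
              + (eLpNorm v₁ 6 (volume.restrict D)).toReal ^ 2)
          * ((eLpNorm (u₁ - v₁) 6 (volume.restrict D)).toReal ^ 2
              + (eLpNorm (u₂ - v₂) 2 (volume.restrict D)).toReal ^ 2) :=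
  wave_cubic_nonlinearity_estimate_general D u₁ v₁ u₂ v₂ hu₁ hv₁ hu₂ hv₂
end

section
/- Let β ∈ (0,∞), ρ₀, ρ₁ ∈ [β/4, ∞), s ∈ ℝ, and define f : (0, π/2) → ℝ by f(x) = (ρ₀ − β/4)·(1/tan(x)) − (ρ₁ − β/4)·tan(x) + (s/2)·sin(2x). Then for all x, y ∈ (0, π/2) with x ≠ y it holds that (f(x) − f(y)) / (x − y) ≤ |s|. -/
/-!
On `(0, π/2)` the tangent is positive and increasing, so with nonnegative coefficients
`(ρ₀ - β/4) / tan x - (ρ₁ - β/4) tan x` is antitone and its difference quotients are `≤ 0`.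
The remaining term `(s/2) sin (2x)` is `|s|`-Lipschitz, so its difference quotients are `≤ |s|`.
-/

open Real Set
open scoped NNReal

lemma AntitoneOn.div_sub_le_zero {f : ℝ → ℝ} {S : Set ℝ} (hf : AntitoneOn f S)
    {x y : ℝ} (hx : x ∈ S) (hy : y ∈ S) : (f x - f y) / (x - y) ≤ 0 := by
  rcases le_total x y with hxy | hyx
  · exact div_nonpos_of_nonneg_of_nonpos (sub_nonneg.2 (hf hx hy hxy)) (sub_nonpos.2 hxy)
  · exact div_nonpos_of_nonpos_of_nonneg (sub_nonpos.2 (hf hy hx hyx)) (sub_nonneg.2 hyx)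

lemma LipschitzWith.div_sub_le {f : ℝ → ℝ} {K : ℝ≥0} (hf : LipschitzWith K f) (x y : ℝ) :
    (f x - f y) / (x - y) ≤ K :=
  calc (f x - f y) / (x - y) ≤ |(f x - f y) / (x - y)| := le_abs_self _
    _ = dist (f x) (f y) / dist x y := by rw [abs_div, Real.dist_eq, Real.dist_eq]
    _ ≤ K := div_le_of_le_mul₀ dist_nonneg K.coe_nonneg (hf.dist_le_mul x y)

lemma div_sub_le_of_antitoneOn_of_lipschitzWith {f g : ℝ → ℝ} {S : Set ℝ} {K : ℝ≥0}
    (hf : AntitoneOn f S) (hg : LipschitzWith K g) {x y : ℝ} (hx : x ∈ S) (hy : y ∈ S) :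
    ((f x + g x) - (f y + g y)) / (x - y) ≤ K := by
  rw [add_sub_add_comm, add_div]
  linarith [hf.div_sub_le_zero hx hy, hg.div_sub_le x y]

lemma monotoneOn_tan_Ioo_zero_pi_div_two : MonotoneOn tan (Ioo 0 (π / 2)) :=
  strictMonoOn_tan.monotoneOn.mono (Ioo_subset_Ioo_left (by linarith [Real.pi_pos]))

lemma antitoneOn_one_div_tan : AntitoneOn (fun x ↦ 1 / tan x) (Ioo 0 (π / 2)) :=
  fun _ hx _ hy hxy ↦ one_div_le_one_div_of_le (tan_pos_of_pos_of_lt_pi_div_two hx.1 hx.2)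
    (monotoneOn_tan_Ioo_zero_pi_div_two hx hy hxy)

lemma antitoneOn_mul_one_div_tan_sub_mul_tan {a b : ℝ} (ha : 0 ≤ a) (hb : 0 ≤ b) :
    AntitoneOn (fun x ↦ a * (1 / tan x) - b * tan x) (Ioo 0 (π / 2)) := by
  intro x hx y hy hxy
  have hcot := antitoneOn_one_div_tan hx hy hxy
  have htan := monotoneOn_tan_Ioo_zero_pi_div_two hx hy hxy
  dsimp only at hcot ⊢
  gcongr

lemma lipschitzWith_mul_sin_mul (a b : ℝ) :
    LipschitzWith (‖a‖₊ * ‖b‖₊) (fun x ↦ a * sin (b * x)) := by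
  simpa only [mul_one, smul_eq_mul, Function.comp_def] using
    ((lipschitzWith_smul a).comp lipschitzWith_sin).comp (lipschitzWith_smul b)

theorem wrightFisher_transformed_drift_one_sided_lipschitz_general
    (β ρ₀ ρ₁ s : ℝ) (hρ₀ : β / 4 ≤ ρ₀) (hρ₁ : β / 4 ≤ ρ₁)
    (x y : ℝ) (hx : x ∈ Set.Ioo 0 (Real.pi / 2)) (hy : y ∈ Set.Ioo 0 (Real.pi / 2)) :
    (((ρ₀ - β / 4) * (1 / Real.tan x) - (ρ₁ - β / 4) * Real.tan x
        + s / 2 * Real.sin (2 * x))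
      - ((ρ₀ - β / 4) * (1 / Real.tan y) - (ρ₁ - β / 4) * Real.tan y
        + s / 2 * Real.sin (2 * y))) / (x - y) ≤ |s| := by
  have hK : ((‖s / 2‖₊ * ‖(2 : ℝ)‖₊ : ℝ≥0) : ℝ) = |s| := by
    push_cast
    rw [norm_div, Real.norm_two, div_mul_cancel₀ _ two_ne_zero, Real.norm_eq_abs]
  rw [← hK]
  exact div_sub_le_of_antitoneOn_of_lipschitzWith
    (antitoneOn_mul_one_div_tan_sub_mul_tan (sub_nonneg.2 hρ₀) (sub_nonneg.2 hρ₁))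
    (lipschitzWith_mul_sin_mul (s / 2) 2) hx hy

/-- The drift of the arcsine-square-root transform of the Wright-Fisher diffusion
satisfies a global one-sided Lipschitz condition with constant `|s|`. -/
theorem wrightFisher_transformed_drift_one_sided_lipschitz
    (β ρ₀ ρ₁ s : ℝ) (hβ : 0 < β) (hρ₀ : β / 4 ≤ ρ₀) (hρ₁ : β / 4 ≤ ρ₁)
    (x y : ℝ) (hx : x ∈ Set.Ioo 0 (Real.pi / 2)) (hy : y ∈ Set.Ioo 0 (Real.pi / 2))
    (hxy : x ≠ y) :
    (((ρ₀ - β / 4) * (1 / Real.tan x) - (ρ₁ - β / 4) * Real.tan x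
        + s / 2 * Real.sin (2 * x))
      - ((ρ₀ - β / 4) * (1 / Real.tan y) - (ρ₁ - β / 4) * Real.tan y
        + s / 2 * Real.sin (2 * y))) / (x - y) ≤ |s| :=
  wrightFisher_transformed_drift_one_sided_lipschitz_general β ρ₀ ρ₁ s hρ₀ hρ₁ x y hx hy
end
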